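/- arXiv:2510.06886 — 6 statements merged into one kernel-verified Lean document; each statement's English description precedes it below -/
import Mathlib

section
/- In any hoop H, for all x, y ∈ H one has ((x → y) → y) · ((((x → y) → y)) → x) = x. (Together with the trivial identities x → x = 1 and ((x → x) → x) → x = 1, this exhibits the terms α₁(x,y) = x → y, α₂(x,y) = ((x → y) → y) → x and θ(x₁, x₂, z) = (x₁ → z) · x₂ as witnesses of protomodularity: θ(α₁(x,y), α₂(x,y), y) = x.) -/
/-- A hoop: a commutative monoid with a residuation `⇨` satisfying
`x ⇨ x = 1`, `x * (x ⇨ y) = y * (y ⇨ x)` and `(x * y) ⇨ z = x ⇨ (y ⇨ z)`. -/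
class Hoop (α : Type*) extends CommMonoid α, HImp α where
  himp_self : ∀ x : α, x ⇨ x = 1
  mul_himp_comm : ∀ x y : α, x * (x ⇨ y) = y * (y ⇨ x)
  mul_himp_assoc : ∀ x y z : α, (x * y) ⇨ z = x ⇨ (y ⇨ z)

namespace Hoop

variable {H : Type*} [Hoop H] (x y : H)

/-- `x ⇨ ((x ⇨ y) ⇨ y) = 1` in any hoop. -/
lemma himp_himp_himp_self (x y : H) : x ⇨ ((x ⇨ y) ⇨ y) = 1 := by
  have h1 : (x * (x ⇨ y)) ⇨ y = x ⇨ ((x ⇨ y) ⇨ y) := mul_himp_assoc x (x ⇨ y) y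
  have h2 : ((x ⇨ y) * x) ⇨ y = (x ⇨ y) ⇨ (x ⇨ y) := mul_himp_assoc (x ⇨ y) x y
  rw [← h1, mul_comm, h2, himp_self]

/-- `1 ⇨ x = x` in any hoop. -/
lemma one_himp (x : H) : (1 : H) ⇨ x = x := by
  set t := x ⇨ 1 with ht
  have h1x : (1 : H) ⇨ x = x * t := by
    have := mul_himp_comm (1 : H) x
    simpa using this
  have ht1 : t * (t ⇨ 1) = t := by
    have := mul_himp_comm t (1 : H)
    rw [this]
    have : (1 : H) ⇨ t = (1 * x) ⇨ 1 := by rw [mul_himp_assoc]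
    simp [this]
    exact ht.symm
  have hxa : x ⇨ ((1 : H) ⇨ x) = 1 := by
    have := himp_himp_himp_self x x
    rwa [himp_self] at this
  have hstar : x = ((1 : H) ⇨ x) * (((1 : H) ⇨ x) ⇨ x) := by
    have := mul_himp_comm x ((1 : H) ⇨ x)
    rw [hxa, mul_one] at this
    exact this
  have hred : ((1 : H) ⇨ x) ⇨ x = t ⇨ 1 := by
    rw [h1x, mul_comm, mul_himp_assoc, himp_self]
  rw [hred, h1x, mul_assoc, ht1] at hstar
  rw [h1x, ← hstar]

end Hoop

/-- In any hoop, `((x → y) → y) · (((x → y) → y) → x) = x`, together with the trivial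
identities `x → x = 1` and `((x → x) → x) → x = 1`, witnessing
`θ(α₁(x,y), α₂(x,y), y) = x` for `α₁(x,y) = x → y`, `α₂(x,y) = ((x → y) → y) → x`,
`θ(x₁,x₂,z) = (x₁ → z) · x₂`. -/
theorem stmt0 {H : Type*} [Hoop H] (x y : H) :
    x ⇨ x = 1 ∧ (((x ⇨ x) ⇨ x) ⇨ x) = 1 ∧
      ((x ⇨ y) ⇨ y) * (((x ⇨ y) ⇨ y) ⇨ x) = x := by
  refine ⟨Hoop.himp_self x, ?_, ?_⟩
  · rw [Hoop.himp_self, Hoop.one_himp, Hoop.himp_self]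
  · have := Hoop.mul_himp_comm ((x ⇨ y) ⇨ y) x
    rw [Hoop.himp_himp_himp_self, mul_one] at this
    rw [this]
end

section
/- Let A, B be hoops and p : A → B, s : B → A hoop homomorphisms with p ∘ s = id_B and with s a strong section, and let X = {a ∈ A | p(a) = 1}. Then the set Y' = {(x, b) ∈ X × B | s(b) → (s(b) · x) = x}, equipped with the operations (x, b) → (y, b') = (s(b' → b) → (x → y), b → b'), (x, b) · (y, b') = (s(b · b') → (s(b · b') · x · y), b · b') and unit (1, 1), is a hoop, and the map A → Y', a ↦ (s(p(a)) → a, p(a)), is an isomorphism of hoops with inverse (x, b) ↦ s(b) · x. -/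
/-- The multiplication `(x,b) · (y,b') := (s(b·b') → (s(b·b') · x · y), b·b')`
of the semidirect product associated with a split extension with strong section. -/
def Ymul {A B : Type*} [Hoop A] [Hoop B] (s : B → A) (q r : A × B) : A × B :=
  (s (q.2 * r.2) ⇨ (s (q.2 * r.2) * q.1 * r.1), q.2 * r.2)

/-- The implication `(x,b) → (y,b') := (s(b' → b) → (x → y), b → b')`
of the semidirect product associated with a split extension with strong section. -/
def Yimp {A B : Type*} [Hoop A] [Hoop B] (s : B → A) (q r : A × B) : A × B :=
  (s (r.2 ⇨ q.2) ⇨ (q.1 ⇨ r.1), q.2 ⇨ r.2)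

/-- Membership in `Y' = {(x,b) ∈ X × B | s b → (s b · x) = x}` where `X = ker p`. -/
def memY' {A B : Type*} [Hoop A] [Hoop B] (p : A → B) (s : B → A) (q : A × B) : Prop :=
  p q.1 = 1 ∧ s q.2 ⇨ (s q.2 * q.1) = q.1

namespace Hoop

variable {α : Type*} [Hoop α]

theorem himp_left_comm (x y z : α) : x ⇨ (y ⇨ z) = y ⇨ (x ⇨ z) := by
  rw [← mul_himp_assoc, mul_comm, mul_himp_assoc]

end Hoop

section SplitExtension

variable {A B : Type*} [Hoop A] {p : A → B} {s : B → A}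

def IsStrongSection (p : A → B) (s : B → A) : Prop :=
  ∀ (a : A) (b : B), a ⇨ s b = s (p a) ⇨ s b

theorem IsStrongSection.mul_himp_eq (hss : IsStrongSection p s) (a : A) :
    s (p a) * (s (p a) ⇨ a) = a := by
  rw [Hoop.mul_himp_comm, hss a (p a), Hoop.himp_self, mul_one]

variable [Hoop B]

variable (p s) in
def toY' (a : A) : A × B :=
  (s (p a) ⇨ a, p a)

theorem toY'_mem (hpi : ∀ a a' : A, p (a ⇨ a') = p a ⇨ p a') (hps : ∀ b : B, p (s b) = b)
    (hss : IsStrongSection p s) (a : A) : memY' p s (toY' p s a) :=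
  ⟨by rw [toY', hpi, hps, Hoop.himp_self], by rw [toY', hss.mul_himp_eq]⟩

theorem toY'_one (hp1 : p 1 = 1) (hs1 : s 1 = 1) : toY' p s 1 = (1, 1) := by
  rw [toY', hp1, hs1, Hoop.himp_self]

theorem toY'_mul (hpm : ∀ a a' : A, p (a * a') = p a * p a')
    (hsm : ∀ b b' : B, s (b * b') = s b * s b') (hss : IsStrongSection p s) (a a' : A) :
    toY' p s (a * a') = Ymul s (toY' p s a) (toY' p s a') := by
  have key : s (p a * p a') * (s (p a) ⇨ a) * (s (p a') ⇨ a') = a * a' := by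
    rw [hsm, mul_assoc, mul_mul_mul_comm, hss.mul_himp_eq, hss.mul_himp_eq]
  simp only [toY', Ymul, key, hpm]

theorem toY'_himp (hpi : ∀ a a' : A, p (a ⇨ a') = p a ⇨ p a')
    (hsm : ∀ b b' : B, s (b * b') = s b * s b') (hss : IsStrongSection p s) (a a' : A) :
    toY' p s (a ⇨ a') = Yimp s (toY' p s a) (toY' p s a') := by
  have key : s (p a ⇨ p a') ⇨ (a ⇨ a') =
      s (p a' ⇨ p a) ⇨ ((s (p a) ⇨ a) ⇨ (s (p a') ⇨ a')) :=
    calc s (p a ⇨ p a') ⇨ (a ⇨ a')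
        = s (p a ⇨ p a') ⇨ (s (p a) ⇨ ((s (p a) ⇨ a) ⇨ a')) := by
          rw [← Hoop.mul_himp_assoc (s (p a)), hss.mul_himp_eq]
      _ = s ((p a ⇨ p a') * p a) ⇨ ((s (p a) ⇨ a) ⇨ a') := by rw [hsm, Hoop.mul_himp_assoc]
      _ = s ((p a' ⇨ p a) * p a') ⇨ ((s (p a) ⇨ a) ⇨ a') := by
          rw [mul_comm, Hoop.mul_himp_comm, mul_comm]
      _ = s (p a' ⇨ p a) ⇨ ((s (p a) ⇨ a) ⇨ (s (p a') ⇨ a')) := by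
          rw [hsm, Hoop.mul_himp_assoc, Hoop.himp_left_comm (s (p a'))]
  simp only [toY', Yimp, hpi, key]

theorem toY'_sect_mul_eq_self (hpm : ∀ a a' : A, p (a * a') = p a * p a')
    (hps : ∀ b : B, p (s b) = b) {q : A × B} (hq : memY' p s q) : toY' p s (s q.2 * q.1) = q := by
  have hb : p (s q.2 * q.1) = q.2 := by rw [hpm, hps, hq.1, mul_one]
  rw [toY', hb, hq.2]

theorem memY'_iff_mem_range (hpm : ∀ a a' : A, p (a * a') = p a * p a')
    (hpi : ∀ a a' : A, p (a ⇨ a') = p a ⇨ p a') (hps : ∀ b : B, p (s b) = b)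
    (hss : IsStrongSection p s) (q : A × B) : memY' p s q ↔ q ∈ Set.range (toY' p s) :=
  ⟨fun hq => ⟨_, toY'_sect_mul_eq_self hpm hps hq⟩, by rintro ⟨a, rfl⟩; exact toY'_mem hpi hps hss a⟩

end SplitExtension

theorem stmt3_general {A B : Type*} [Hoop A] [Hoop B] (p : A → B) (s : B → A)
    (hp1 : p 1 = 1) (hpm : ∀ a a' : A, p (a * a') = p a * p a')
    (hpi : ∀ a a' : A, p (a ⇨ a') = p a ⇨ p a')
    (hs1 : s 1 = 1) (hsm : ∀ b b' : B, s (b * b') = s b * s b')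
    (hps : ∀ b : B, p (s b) = b)
    (hss : ∀ (a : A) (b : B), a ⇨ s b = s (p a) ⇨ s b) :
    -- Y' contains the unit and is closed under the operations
    memY' p s ((1 : A), (1 : B)) ∧
    (∀ q r : A × B, memY' p s q → memY' p s r →
      memY' p s (Ymul s q r) ∧ memY' p s (Yimp s q r)) ∧
    -- (Y', ·, 1) is a commutative monoid
    (∀ q r : A × B, memY' p s q → memY' p s r → Ymul s q r = Ymul s r q) ∧
    (∀ q r t : A × B, memY' p s q → memY' p s r → memY' p s t →
      Ymul s (Ymul s q r) t = Ymul s q (Ymul s r t)) ∧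
    (∀ q : A × B, memY' p s q →
      Ymul s ((1 : A), (1 : B)) q = q ∧ Ymul s q ((1 : A), (1 : B)) = q) ∧
    -- the hoop axioms hold on Y'
    (∀ q : A × B, memY' p s q → Yimp s q q = ((1 : A), (1 : B))) ∧
    (∀ q r : A × B, memY' p s q → memY' p s r →
      Ymul s q (Yimp s q r) = Ymul s r (Yimp s r q)) ∧
    (∀ q r t : A × B, memY' p s q → memY' p s r → memY' p s t →
      Yimp s (Ymul s q r) t = Yimp s q (Yimp s r t)) ∧
    -- a ↦ (s(p a) → a, p a) is a hoop homomorphism landing in Y'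
    (∀ a : A, memY' p s (s (p a) ⇨ a, p a)) ∧
    ((s (p (1 : A)) ⇨ (1 : A), p (1 : A)) = ((1 : A), (1 : B))) ∧
    (∀ a a' : A,
      (s (p (a * a')) ⇨ (a * a'), p (a * a')) = Ymul s (s (p a) ⇨ a, p a) (s (p a') ⇨ a', p a') ∧
      (s (p (a ⇨ a')) ⇨ (a ⇨ a'), p (a ⇨ a')) = Yimp s (s (p a) ⇨ a, p a) (s (p a') ⇨ a', p a')) ∧
    -- it is a bijection onto Y' with inverse (x,b) ↦ s b · x
    (∀ a : A, s (p a) * (s (p a) ⇨ a) = a) ∧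
    (∀ q : A × B, memY' p s q → (s (p (s q.2 * q.1)) ⇨ (s q.2 * q.1), p (s q.2 * q.1)) = q) := by
  have hY := memY'_iff_mem_range hpm hpi hps hss
  have hone := toY'_one hp1 hs1
  have hmul := toY'_mul hpm hsm hss
  have himp := toY'_himp hpi hsm hss
  refine ⟨hone ▸ toY'_mem hpi hps hss 1, ?_, ?_, ?_, ?_, ?_, ?_, ?_, toY'_mem hpi hps hss, hone,
    fun a a' => ⟨hmul a a', himp a a'⟩, IsStrongSection.mul_himp_eq hss,
    fun _ => toY'_sect_mul_eq_self hpm hps⟩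
  all_goals simp only [hY, Set.mem_range, forall_exists_index]
  · rintro _ _ a rfl a' rfl
    exact ⟨⟨_, hmul a a'⟩, _, himp a a'⟩
  · rintro _ _ a rfl a' rfl
    rw [← hmul, ← hmul, mul_comm]
  · rintro _ _ _ a rfl a' rfl a'' rfl
    rw [← hmul, ← hmul, ← hmul, ← hmul, mul_assoc]
  · rintro _ a rfl
    rw [← hone, ← hmul, ← hmul, one_mul, mul_one]
    exact ⟨rfl, rfl⟩
  · rintro _ a rfl
    rw [← himp, Hoop.himp_self, hone]
  · rintro _ _ a rfl a' rfl
    rw [← himp, ← himp, ← hmul, ← hmul, Hoop.mul_himp_comm]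
  · rintro _ _ _ a rfl a' rfl a'' rfl
    rw [← hmul, ← himp, ← himp, ← himp, Hoop.mul_himp_assoc]

/-- For a split epimorphism of hoops `p : A → B` with strong section `s` and kernel
`X`, the set `Y' = {(x,b) ∈ X × B | s b → (s b · x) = x}` with the operations
`(x,b) → (y,b') = (s(b' → b) → (x → y), b → b')`,
`(x,b) · (y,b') = (s(b·b') → (s(b·b')·x·y), b·b')` and unit `(1,1)` is a hoop, and
`a ↦ (s(p a) → a, p a)` is an isomorphism of hoops `A ≅ Y'` with inverse `(x,b) ↦ s b · x`. -/
theorem stmt3 {A B : Type*} [Hoop A] [Hoop B] (p : A → B) (s : B → A)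
    (hp1 : p 1 = 1) (hpm : ∀ a a' : A, p (a * a') = p a * p a')
    (hpi : ∀ a a' : A, p (a ⇨ a') = p a ⇨ p a')
    (hs1 : s 1 = 1) (hsm : ∀ b b' : B, s (b * b') = s b * s b')
    (hsi : ∀ b b' : B, s (b ⇨ b') = s b ⇨ s b')
    (hps : ∀ b : B, p (s b) = b)
    (hss : ∀ (a : A) (b : B), a ⇨ s b = s (p a) ⇨ s b) :
    -- Y' contains the unit and is closed under the operations
    memY' p s ((1 : A), (1 : B)) ∧
    (∀ q r : A × B, memY' p s q → memY' p s r →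
      memY' p s (Ymul s q r) ∧ memY' p s (Yimp s q r)) ∧
    -- (Y', ·, 1) is a commutative monoid
    (∀ q r : A × B, memY' p s q → memY' p s r → Ymul s q r = Ymul s r q) ∧
    (∀ q r t : A × B, memY' p s q → memY' p s r → memY' p s t →
      Ymul s (Ymul s q r) t = Ymul s q (Ymul s r t)) ∧
    (∀ q : A × B, memY' p s q →
      Ymul s ((1 : A), (1 : B)) q = q ∧ Ymul s q ((1 : A), (1 : B)) = q) ∧
    -- the hoop axioms hold on Y'
    (∀ q : A × B, memY' p s q → Yimp s q q = ((1 : A), (1 : B))) ∧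
    (∀ q r : A × B, memY' p s q → memY' p s r →
      Ymul s q (Yimp s q r) = Ymul s r (Yimp s r q)) ∧
    (∀ q r t : A × B, memY' p s q → memY' p s r → memY' p s t →
      Yimp s (Ymul s q r) t = Yimp s q (Yimp s r t)) ∧
    -- a ↦ (s(p a) → a, p a) is a hoop homomorphism landing in Y'
    (∀ a : A, memY' p s (s (p a) ⇨ a, p a)) ∧
    ((s (p (1 : A)) ⇨ (1 : A), p (1 : A)) = ((1 : A), (1 : B))) ∧
    (∀ a a' : A,
      (s (p (a * a')) ⇨ (a * a'), p (a * a')) = Ymul s (s (p a) ⇨ a, p a) (s (p a') ⇨ a', p a') ∧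
      (s (p (a ⇨ a')) ⇨ (a ⇨ a'), p (a ⇨ a')) = Yimp s (s (p a) ⇨ a, p a) (s (p a') ⇨ a', p a')) ∧
    -- it is a bijection onto Y' with inverse (x,b) ↦ s b · x
    (∀ a : A, s (p a) * (s (p a) ⇨ a) = a) ∧
    (∀ q : A × B, memY' p s q → (s (p (s q.2 * q.1)) ⇨ (s q.2 * q.1), p (s q.2 * q.1)) = q) :=
  stmt3_general p s hp1 hpm hpi hs1 hsm hps hss
end

section
/- Let A, B be basic hoops and p : A → B, s : B → A homomorphisms with p ∘ s = id_B and s a strong section, let X = {a ∈ A | p(a) = 1}, and let Y' = {(x, b) ∈ X × B | s(b) → (s(b) · x) = x} with the hoop operations (x, b) → (y, b') = (s(b' → b) → (x → y), b → b') and (x, b) · (y, b') = (s(b · b') → (s(b · b') · x · y), b · b'). Then for all (x, b), (y, b') ∈ Y': (x, b) ∧ (y, b') = (s(b ∧ b') → (s(b ∧ b') · (x ∧ y)), b ∧ b') and (x, b) ∨ (y, b') = (s(b ∨ b') → (s(b ∨ b') · (((s(b' → b) → (x → y)) → y) ∧ ((s(b → b') → (y → x)) → x))), b ∨ b'), where in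 any basic hoop u ∧ v := u · (u → v) and u ∨ v := ((u → v) → v) ∧ ((v → u) → u). -/
/-- A basic hoop: a hoop satisfying `((x → y) → z) → (((y → x) → z) → z) = 1`. -/
class BasicHoop (α : Type*) extends Hoop α where
  basic : ∀ x y z : α, ((x ⇨ y) ⇨ z) ⇨ (((y ⇨ x) ⇨ z) ⇨ z) = 1

/-- The meet `u ∧ v := u · (u → v)` of a hoop. -/
def hmeet {α : Type*} [Hoop α] (x y : α) : α := x * (x ⇨ y)

/-- The join `u ∨ v := ((u → v) → v) ∧ ((v → u) → u)` of a basic hoop. -/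
def hjoin {α : Type*} [Hoop α] (x y : α) : α :=
  hmeet ((x ⇨ y) ⇨ y) ((y ⇨ x) ⇨ x)

/-- The meet of the semidirect product hoop. -/
def Ymeet {A B : Type*} [Hoop A] [Hoop B] (s : B → A) (q r : A × B) : A × B :=
  Ymul s q (Yimp s q r)

/-- The join of the semidirect product hoop. -/
def Yjoin {A B : Type*} [Hoop A] [Hoop B] (s : B → A) (q r : A × B) : A × B :=
  Ymeet s (Yimp s (Yimp s q r) r) (Yimp s (Yimp s r q) q)

/-!
Strongness of `s` says that `w ⇨ s c` only depends on `p w`; for `w` in the kernel of `p` this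
gives `s c * (s c ⇨ w) = s c * w`, so the correction factor `s c ⇨ _` in the semidirect
implication is absorbed by multiplication with `s c`. Writing `b ∧ b' = b' * (b' ⇨ b)`, this
collapses the semidirect meet to the stated normal form. The join is the semidirect meet of two
iterated implications, whose first components again lie in the kernel, so it reduces to the
meet case.
-/

namespace Hoop

variable {α : Type*} [Hoop α]

theorem one_himp_s4 (a : α) : 1 ⇨ a = a := by
  have one_himp_himp : ∀ y z : α, 1 ⇨ (y ⇨ z) = y ⇨ z := fun y z => by
    rw [← mul_himp_assoc, one_mul]
  have mul_himp_one : ∀ t : α, t * (t ⇨ 1) = 1 ⇨ t := fun t => by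
    rw [mul_himp_comm, one_mul]
  have h_le : a ⇨ (1 ⇨ a) = 1 := by
    rw [← mul_himp_assoc, mul_one, himp_self]
  have h_meet : a = (1 ⇨ a) * ((1 ⇨ a) ⇨ a) := by
    simpa only [h_le, mul_one] using mul_himp_comm a (1 ⇨ a)
  have h_dneg : (1 ⇨ a) ⇨ a = (a ⇨ 1) ⇨ 1 := by
    rw [← mul_himp_one a, mul_comm, mul_himp_assoc, himp_self]
  calc 1 ⇨ a = a * (a ⇨ 1) := (mul_himp_one a).symm
    _ = a * ((a ⇨ 1) * ((a ⇨ 1) ⇨ 1)) := by rw [mul_himp_one (a ⇨ 1), one_himp_himp]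
    _ = (1 ⇨ a) * ((1 ⇨ a) ⇨ a) := by rw [← mul_assoc, mul_himp_one, h_dneg]
    _ = a := h_meet.symm

theorem himp_one (a : α) : a ⇨ 1 = 1 := by
  have h : a * (a ⇨ 1) = a := by rw [mul_himp_comm, one_mul, one_himp_s4]
  calc a ⇨ 1 = (a * (a ⇨ 1)) ⇨ 1 := by rw [h]
    _ = (a ⇨ 1) ⇨ (a ⇨ 1) := by rw [mul_comm, mul_himp_assoc]
    _ = 1 := himp_self _

theorem himp_himp_self (a b : α) : a ⇨ (b ⇨ a) = 1 := by
  rw [← mul_himp_assoc, mul_comm, mul_himp_assoc, himp_self, himp_one]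

end Hoop

section SemidirectProduct

variable {A B : Type*} [Hoop A] [Hoop B] {p : A → B} {s : B → A}

theorem section_mul_himp_of_map_eq_one (hs1 : s 1 = 1)
    (hss : ∀ (a : A) (b : B), a ⇨ s b = s (p a) ⇨ s b) (c : B) {w : A} (hw : p w = 1) :
    s c * (s c ⇨ w) = s c * w := by
  rw [Hoop.mul_himp_comm, hss, hw, hs1, Hoop.one_himp_s4, mul_comm]

theorem Ymeet_of_map_eq_one (hpi : ∀ a a' : A, p (a ⇨ a') = p a ⇨ p a') (hs1 : s 1 = 1)
    (hsm : ∀ b b' : B, s (b * b') = s b * s b')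
    (hss : ∀ (a : A) (b : B), a ⇨ s b = s (p a) ⇨ s b)
    {x y : A} (b b' : B) (hx : p x = 1) (hy : p y = 1) :
    Ymeet s (x, b) (y, b')
      = (s (hmeet b b') ⇨ (s (hmeet b b') * hmeet x y), hmeet b b') := by
  have hxy : p (x ⇨ y) = 1 := by rw [hpi, hx, hy, Hoop.himp_self]
  have hsb : s (hmeet b b') = s b' * s (b' ⇨ b) := by
    rw [hmeet, Hoop.mul_himp_comm, hsm]
  have key : s (hmeet b b') * x * (s (b' ⇨ b) ⇨ (x ⇨ y)) = s (hmeet b b') * hmeet x y := by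
    rw [hsb, hmeet, mul_right_comm _ _ x, mul_assoc,
      section_mul_himp_of_map_eq_one hs1 hss _ hxy, mul_mul_mul_comm]
  simp only [Ymeet, Ymul, Yimp]
  rw [← hmeet, key]

theorem map_himp_himp_eq_one (hpi : ∀ a a' : A, p (a ⇨ a') = p a ⇨ p a') (w : A) {u v : A}
    (hu : p u = 1) (hv : p v = 1) : p ((w ⇨ (u ⇨ v)) ⇨ v) = 1 := by
  simp only [hpi, hu, hv, Hoop.himp_self, Hoop.himp_one]

theorem Yimp_Yimp_self (hs1 : s 1 = 1) (x y : A) (b b' : B) :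
    Yimp s (Yimp s (x, b) (y, b')) (y, b')
      = ((s (b' ⇨ b) ⇨ (x ⇨ y)) ⇨ y, (b ⇨ b') ⇨ b') := by
  simp only [Yimp]
  rw [Hoop.himp_himp_self, hs1, Hoop.one_himp_s4]

end SemidirectProduct

theorem stmt4_general {A B : Type*} [BasicHoop A] [BasicHoop B] (p : A → B) (s : B → A)
    (hpi : ∀ a a' : A, p (a ⇨ a') = p a ⇨ p a')
    (hs1 : s 1 = 1) (hsm : ∀ b b' : B, s (b * b') = s b * s b')
    (hss : ∀ (a : A) (b : B), a ⇨ s b = s (p a) ⇨ s b)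
    (x y : A) (b b' : B)
    (hq : memY' p s (x, b)) (hr : memY' p s (y, b')) :
    Ymeet s (x, b) (y, b')
      = (s (hmeet b b') ⇨ (s (hmeet b b') * hmeet x y), hmeet b b') ∧
    Yjoin s (x, b) (y, b')
      = (s (hjoin b b') ⇨ (s (hjoin b b') *
          hmeet ((s (b' ⇨ b) ⇨ (x ⇨ y)) ⇨ y) ((s (b ⇨ b') ⇨ (y ⇨ x)) ⇨ x)),
          hjoin b b') := by
  have hx : p x = 1 := hq.1
  have hy : p y = 1 := hr.1
  refine ⟨Ymeet_of_map_eq_one hpi hs1 hsm hss b b' hx hy, ?_⟩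
  rw [Yjoin, Yimp_Yimp_self hs1, Yimp_Yimp_self hs1]
  exact Ymeet_of_map_eq_one hpi hs1 hsm hss _ _
    (map_himp_himp_eq_one hpi _ hx hy) (map_himp_himp_eq_one hpi _ hy hx)

/-- For a split extension of basic hoops with strong section, the lattice operations of
the semidirect product `Y'` are given by
`(x,b) ∧ (y,b') = (s(b ∧ b') → (s(b ∧ b') · (x ∧ y)), b ∧ b')` and
`(x,b) ∨ (y,b') = (s(b ∨ b') → (s(b ∨ b') · (((s(b' → b) → (x → y)) → y) ∧
  ((s(b → b') → (y → x)) → x))), b ∨ b')`. -/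
theorem stmt4 {A B : Type*} [BasicHoop A] [BasicHoop B] (p : A → B) (s : B → A)
    (hp1 : p 1 = 1) (hpm : ∀ a a' : A, p (a * a') = p a * p a')
    (hpi : ∀ a a' : A, p (a ⇨ a') = p a ⇨ p a')
    (hs1 : s 1 = 1) (hsm : ∀ b b' : B, s (b * b') = s b * s b')
    (hsi : ∀ b b' : B, s (b ⇨ b') = s b ⇨ s b')
    (hps : ∀ b : B, p (s b) = b)
    (hss : ∀ (a : A) (b : B), a ⇨ s b = s (p a) ⇨ s b)
    (x y : A) (b b' : B)
    (hq : memY' p s (x, b)) (hr : memY' p s (y, b')) :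
    Ymeet s (x, b) (y, b')
      = (s (hmeet b b') ⇨ (s (hmeet b b') * hmeet x y), hmeet b b') ∧
    Yjoin s (x, b) (y, b')
      = (s (hjoin b b') ⇨ (s (hjoin b b') *
          hmeet ((s (b' ⇨ b) ⇨ (x ⇨ y)) ⇨ y) ((s (b ⇨ b') ⇨ (y ⇨ x)) ⇨ x)),
          hjoin b b') :=
  stmt4_general p s hpi hs1 hsm hss x y b b' hq hr
end

section
/- Let A be a BL-algebra. For every x ∈ A and every y ∈ A with ¬¬y = y, one has x → y = ¬¬x → y. (Equivalently, the split epimorphism p : A → MV(A), p(a) = ¬¬a, onto the subalgebra MV(A) = {a ∈ A | ¬¬a = a} of regular elements has a strong section given by the inclusion of MV(A) into A.) -/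
/-!
By exchange, `a ⇨ (b ⇨ c) = b ⇨ (a ⇨ c)`, and the triple-negation law
`((a ⇨ c) ⇨ c) ⇨ c = a ⇨ c`, a `c`-regular `y = (y ⇨ c) ⇨ c` satisfies
`x ⇨ y = (y ⇨ c) ⇨ (x ⇨ c) = (y ⇨ c) ⇨ (((x ⇨ c) ⇨ c) ⇨ c) = ((x ⇨ c) ⇨ c) ⇨ y`.
-/

/-- A BL-algebra: a bounded commutative integral residuated lattice satisfying
divisibility and prelinearity. The bottom element is `0` and the top element is `1`. -/
class BLAlgebra (α : Type*) extends Lattice α, CommMonoid α, HImp α, Zero α where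
  zero_le : ∀ x : α, (0 : α) ≤ x
  le_one : ∀ x : α, x ≤ 1
  residuation : ∀ x y z : α, x * y ≤ z ↔ x ≤ y ⇨ z
  divisibility : ∀ x y : α, x ⊓ y = x * (x ⇨ y)
  prelinearity : ∀ x y : α, (x ⇨ y) ⊔ (y ⇨ x) = 1

namespace BLAlgebra

variable {A : Type*} [BLAlgebra A] {a b c : A}

theorem mul_le_iff_le_himp : a * b ≤ c ↔ a ≤ b ⇨ c := residuation a b c

theorem himp_mul_le (a b : A) : (a ⇨ b) * a ≤ b := mul_le_iff_le_himp.mpr le_rfl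

theorem mul_le_himp_mul (a b : A) : a ≤ b ⇨ a * b := mul_le_iff_le_himp.mp le_rfl

theorem mul_le_mul_right_of_le (h : a ≤ b) (c : A) : a * c ≤ b * c :=
  mul_le_iff_le_himp.mpr (h.trans (mul_le_himp_mul b c))

theorem himp_le_himp_of_le (h : a ≤ b) (c : A) : b ⇨ c ≤ a ⇨ c := by
  rw [← mul_le_iff_le_himp, mul_comm]
  calc a * (b ⇨ c) ≤ b * (b ⇨ c) := mul_le_mul_right_of_le h _
    _ = (b ⇨ c) * b := mul_comm _ _
    _ ≤ c := himp_mul_le b c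

theorem himp_himp_le_himp_himp (a b c : A) : a ⇨ b ⇨ c ≤ b ⇨ a ⇨ c := by
  rw [← mul_le_iff_le_himp, ← mul_le_iff_le_himp]
  calc (a ⇨ b ⇨ c) * b * a = (a ⇨ b ⇨ c) * a * b := mul_right_comm _ _ _
    _ ≤ (b ⇨ c) * b := mul_le_mul_right_of_le (himp_mul_le a _) b
    _ ≤ c := himp_mul_le b c

theorem himp_himp_comm (a b c : A) : a ⇨ b ⇨ c = b ⇨ a ⇨ c :=
  le_antisymm (himp_himp_le_himp_himp a b c) (himp_himp_le_himp_himp b a c)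

theorem le_himp_himp_self (a c : A) : a ≤ (a ⇨ c) ⇨ c := by
  rw [← mul_le_iff_le_himp, mul_comm]
  exact himp_mul_le a c

theorem himp_himp_himp_self (a c : A) : ((a ⇨ c) ⇨ c) ⇨ c = a ⇨ c :=
  le_antisymm (himp_le_himp_of_le (le_himp_himp_self a c) c) (le_himp_himp_self _ c)

theorem himp_eq_himp_himp_himp_of_himp_himp_eq (a : A) (hb : (b ⇨ c) ⇨ c = b) :
    a ⇨ b = ((a ⇨ c) ⇨ c) ⇨ b := by
  rw [← hb, himp_himp_comm a, himp_himp_comm _ (b ⇨ c), himp_himp_himp_self]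

end BLAlgebra

/-- In a BL-algebra, for every `x` and every regular element `y` (i.e. `¬¬y = y`) one has
`x → y = ¬¬x → y`, where `¬a := a → 0`; i.e. the split epimorphism `a ↦ ¬¬a` onto the
MV-subalgebra of regular elements has strong section. -/
theorem stmt5 {A : Type*} [BLAlgebra A] (x y : A)
    (hy : (y ⇨ (0 : A)) ⇨ (0 : A) = y) :
    x ⇨ y = ((x ⇨ (0 : A)) ⇨ (0 : A)) ⇨ y :=
  BLAlgebra.himp_eq_himp_himp_himp_of_himp_himp_eq x hy
end

section
/- Let B, X be L-algebras such that B operates on X via (b, x) ↦ bx. Then the semidirect product X ⋊ B, defined as the cartesian product X × B equipped with the operation (x, b) → (y, b') = (((b → b')x) → ((b' → b)y), b → b') and unit (1, 1), is an L-algebra. -/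
/-!
The second coordinate of `X ⋊ B` is just the L-algebra `B`, so every axiom reduces to its
first coordinate. There, `b(x → y) = bx → by` distributes the outer operation, and the rule
`(b → b')(bx) = (b' → b)(b'x)`, combined with the cycloid identity of `B`, identifies the
differently twisted copies of each coordinate, so that the cycloid identity of `X ⋊ B` becomes
one of `X`. For antisymmetry, the second coordinates agree first, after which all twists
are by `b → b = 1`, which acts trivially.
-/

/-- An L-algebra: an algebra `(L, →, 1)` with `1 → x = x`, `x → x = 1`, `x → 1 = 1`,
`(x → y) → (x → z) = (y → x) → (y → z)`, and antisymmetry: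
`x → y = 1` and `y → x = 1` imply `x = y`. -/
class LAlgebra (α : Type*) extends One α, HImp α where
  one_himp : ∀ x : α, (1 : α) ⇨ x = x
  himp_self : ∀ x : α, x ⇨ x = 1
  himp_one : ∀ x : α, x ⇨ (1 : α) = 1
  cycloid : ∀ x y z : α, (x ⇨ y) ⇨ (x ⇨ z) = (y ⇨ x) ⇨ (y ⇨ z)
  antisymm : ∀ x y : α, x ⇨ y = 1 → y ⇨ x = 1 → x = y

/-- The implication `(x,b) → (y,b') := (((b → b')x) → ((b' → b)y), b → b')` of Rump's
semidirect product `X ⋊ B` of L-algebras, where `B` operates on `X` via `act`. -/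
def Limp {B X : Type*} [LAlgebra B] [LAlgebra X] (act : B → X → X)
    (q r : X × B) : X × B :=
  (act (q.2 ⇨ r.2) q.1 ⇨ act (r.2 ⇨ q.2) r.1, q.2 ⇨ r.2)

namespace LAlgebra

theorem act_himp_himp_act_himp {B X : Type*} [LAlgebra B] {act : B → X → X}
    (htwist : ∀ (b b' : B) (x : X), act (b ⇨ b') (act b x) = act (b' ⇨ b) (act b' x))
    (b c d : B) (z : X) :
    act ((b ⇨ d) ⇨ (b ⇨ c)) (act (d ⇨ b) z) = act ((c ⇨ d) ⇨ (c ⇨ b)) (act (d ⇨ c) z) := by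
  rw [← cycloid d b c, ← cycloid d c b]
  exact htwist (d ⇨ b) (d ⇨ c) z

theorem act_one {B X : Type*} [LAlgebra X] {act : B → X → X}
    (hdist : ∀ (b : B) (x y : X), act b (x ⇨ y) = act b x ⇨ act b y) (b : B) :
    act b (1 : X) = 1 := by
  calc act b 1 = act b (1 ⇨ 1) := by rw [himp_self]
    _ = act b 1 ⇨ act b 1 := hdist b 1 1
    _ = 1 := himp_self _

variable {B X : Type*} [LAlgebra B] [LAlgebra X] {act : B → X → X}

theorem limp_one_left (hdist : ∀ (b : B) (x y : X), act b (x ⇨ y) = act b x ⇨ act b y)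
    (hunit : ∀ x : X, act 1 x = x) (q : X × B) :
    Limp act (1, 1) q = q := by
  simp only [Limp, one_himp, himp_one, act_one hdist, hunit]

theorem limp_self (hunit : ∀ x : X, act 1 x = x) (q : X × B) :
    Limp act q q = (1, 1) := by
  simp only [Limp, himp_self, hunit]

theorem limp_one_right (hdist : ∀ (b : B) (x y : X), act b (x ⇨ y) = act b x ⇨ act b y)
    (hunit : ∀ x : X, act 1 x = x) (q : X × B) :
    Limp act q (1, 1) = (1, 1) := by
  simp only [Limp, one_himp, himp_one, act_one hdist, hunit]

theorem limp_cycloid (hdist : ∀ (b : B) (x y : X), act b (x ⇨ y) = act b x ⇨ act b y)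
    (htwist : ∀ (b b' : B) (x : X), act (b ⇨ b') (act b x) = act (b' ⇨ b) (act b' x))
    (q r t : X × B) :
    Limp act (Limp act q r) (Limp act q t) = Limp act (Limp act r q) (Limp act r t) := by
  obtain ⟨x, b⟩ := q
  obtain ⟨y, c⟩ := r
  obtain ⟨z, d⟩ := t
  simp only [Limp, hdist, Prod.mk.injEq]
  refine ⟨?_, cycloid b c d⟩
  rw [htwist (b ⇨ d) (b ⇨ c) x, htwist (c ⇨ d) (c ⇨ b) y, ← cycloid b c d,
    act_himp_himp_act_himp htwist b c d z]
  exact cycloid _ _ _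

theorem limp_antisymm (hunit : ∀ x : X, act 1 x = x) (q r : X × B)
    (hqr : Limp act q r = (1, 1)) (hrq : Limp act r q = (1, 1)) : q = r := by
  obtain ⟨x, b⟩ := q
  obtain ⟨y, c⟩ := r
  simp only [Limp, Prod.mk.injEq] at hqr hrq
  obtain rfl : b = c := antisymm b c hqr.2 hrq.2
  rw [himp_self, hunit, hunit] at hqr hrq
  rw [antisymm x y hqr.1 hrq.1]

end LAlgebra

open LAlgebra in
/-- If the L-algebra `B` operates on the L-algebra `X`, then the semidirect product
`X ⋊ B`, i.e. `X × B` with `(x,b) → (y,b') = (((b → b')x) → ((b' → b)y), b → b')`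
and unit `(1,1)`, is an L-algebra. -/
theorem stmt17 {B X : Type*} [LAlgebra B] [LAlgebra X] (act : B → X → X)
    (O1 : ∀ (b : B) (x y : X), act b (x ⇨ y) = act b x ⇨ act b y)
    (O2 : ∀ (b b' : B) (x : X), act (b ⇨ b') (act b x) = act (b' ⇨ b) (act b' x))
    (O3 : ∀ x : X, act 1 x = x) :
    (∀ q : X × B, Limp act ((1 : X), (1 : B)) q = q) ∧
    (∀ q : X × B, Limp act q q = ((1 : X), (1 : B))) ∧
    (∀ q : X × B, Limp act q ((1 : X), (1 : B)) = ((1 : X), (1 : B))) ∧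
    (∀ q r t : X × B,
      Limp act (Limp act q r) (Limp act q t)
        = Limp act (Limp act r q) (Limp act r t)) ∧
    (∀ q r : X × B, Limp act q r = ((1 : X), (1 : B)) →
      Limp act r q = ((1 : X), (1 : B)) → q = r) :=
  ⟨limp_one_left O1 O3, limp_self O3, limp_one_right O1 O3, limp_cycloid O1 O2,
    limp_antisymm O3⟩
end

section
/- Let A, B be hoops and p : A → B, s : B → A hoop homomorphisms with p ∘ s = id_B and with s a strong section, and let X = {a ∈ A | p(a) = 1}. Then for all b, b' ∈ B and all x, y ∈ X satisfying s(b) → (s(b) · x) = x and s(b') → (s(b') · y) = y, one has (s(b → b') → x) → (s(b' → b) → y) = s(b' → b) → (x → y). Hence on the set Y' = {(x, b) ∈ X × B | s(b) → (s(b) · x) = x}, Rump's L-algebra semidirect-product implication (x, b) → (y, b') = ((s(b → b') → x) → (s(b' → b) → y), b → b') coincides with the hoop semidirect-product implication (x, b) → (y, b') = (s(b' → b) → (x → y), b → b'). -/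
/-! Write `u = s(b → b')`, `v = s(b' → b)` and `t = s b' → s b · x`. Since `s` is multiplicative,
`u · s b = s b' · v`, so `u → x = v → t`; as `p t = b' → b` and `s` is strong, `t → v = 1`, whence
`v · (u → x) = t`. The hypothesis on `y` lets us cancel the factor `s b'` in front of an
implication into `y`, and `s b' · t = s b' · v · x` by the hoop identity
`s b' · (s b' → a) = a · s(p a → b')` of a strong section. -/

namespace Hoop

variable {α : Type*} [Hoop α]

theorem mul_himp_of_himp_eq_one {a b : α} (h : b ⇨ a = 1) : a * (a ⇨ b) = b := by
  rw [mul_himp_comm, h, mul_one]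

theorem himp_eq_mul_himp_mul {a c y : α} (h : a ⇨ (a * y) = y) :
    c ⇨ y = (a * c) ⇨ (a * y) := by
  rw [mul_comm, mul_himp_assoc, h]

end Hoop

section StrongSection

variable {A B : Type*} [Hoop A] {p : A → B} {s : B → A}

theorem himp_section_comp_eq_one (hss : ∀ (a : A) (b : B), a ⇨ s b = s (p a) ⇨ s b) (a : A) :
    a ⇨ s (p a) = 1 := by
  rw [hss, Hoop.himp_self]

variable [Hoop B]

theorem section_mul_himp (hsi : ∀ b b' : B, s (b ⇨ b') = s b ⇨ s b')
    (hss : ∀ (a : A) (b : B), a ⇨ s b = s (p a) ⇨ s b) (a : A) (b : B) :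
    s b * (s b ⇨ a) = a * s (p a ⇨ b) := by
  rw [Hoop.mul_himp_comm, hss, hsi]

theorem section_himp_mul_section_comm (hsm : ∀ b b' : B, s (b * b') = s b * s b') (b b' : B) :
    s (b ⇨ b') * s b = s b' * s (b' ⇨ b) := by
  rw [← hsm, ← hsm, mul_comm, Hoop.mul_himp_comm]

theorem section_himp_eq_himp_section_himp (hsm : ∀ b b' : B, s (b * b') = s b * s b')
    {b b' : B} {x : A} (hx : s b ⇨ (s b * x) = x) :
    s (b ⇨ b') ⇨ x = s (b' ⇨ b) ⇨ (s b' ⇨ (s b * x)) := by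
  conv_lhs => rw [← hx]
  rw [← Hoop.mul_himp_assoc, section_himp_mul_section_comm hsm, mul_comm (s b'),
    Hoop.mul_himp_assoc]

theorem proj_section_mul_of_proj_eq_one (hpm : ∀ a a' : A, p (a * a') = p a * p a')
    (hps : ∀ b : B, p (s b) = b) {x : A} (hx : p x = 1) (b : B) : p (s b * x) = b := by
  rw [hpm, hps, hx, mul_one]

theorem himp_section_himp_eq_one (hpm : ∀ a a' : A, p (a * a') = p a * p a')
    (hpi : ∀ a a' : A, p (a ⇨ a') = p a ⇨ p a') (hps : ∀ b : B, p (s b) = b)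
    (hss : ∀ (a : A) (b : B), a ⇨ s b = s (p a) ⇨ s b) {x : A} (hx : p x = 1) (b b' : B) :
    (s b' ⇨ (s b * x)) ⇨ s (b' ⇨ b) = 1 := by
  have hp : p (s b' ⇨ (s b * x)) = b' ⇨ b := by
    rw [hpi, hps, proj_section_mul_of_proj_eq_one hpm hps hx]
  simpa only [hp] using himp_section_comp_eq_one hss (s b' ⇨ (s b * x))

theorem section_mul_himp_section_mul (hpm : ∀ a a' : A, p (a * a') = p a * p a')
    (hsm : ∀ b b' : B, s (b * b') = s b * s b') (hsi : ∀ b b' : B, s (b ⇨ b') = s b ⇨ s b')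
    (hps : ∀ b : B, p (s b) = b) (hss : ∀ (a : A) (b : B), a ⇨ s b = s (p a) ⇨ s b)
    {x : A} (hx : p x = 1) (b b' : B) :
    s b' * (s b' ⇨ (s b * x)) = s b' * (s (b' ⇨ b) * x) := by
  rw [section_mul_himp hsi hss, proj_section_mul_of_proj_eq_one hpm hps hx, mul_right_comm,
    mul_comm (s b), section_himp_mul_section_comm hsm, mul_assoc]

end StrongSection

theorem stmt18_general {A B : Type*} [Hoop A] [Hoop B] (p : A → B) (s : B → A)
    (hpm : ∀ a a' : A, p (a * a') = p a * p a')
    (hpi : ∀ a a' : A, p (a ⇨ a') = p a ⇨ p a')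
    (hsm : ∀ b b' : B, s (b * b') = s b * s b')
    (hsi : ∀ b b' : B, s (b ⇨ b') = s b ⇨ s b')
    (hps : ∀ b : B, p (s b) = b)
    (hss : ∀ (a : A) (b : B), a ⇨ s b = s (p a) ⇨ s b) :
    ∀ (b b' : B) (x y : A), p x = 1 → p y = 1 →
      s b ⇨ (s b * x) = x → s b' ⇨ (s b' * y) = y →
      (s (b ⇨ b') ⇨ x) ⇨ (s (b' ⇨ b) ⇨ y) = s (b' ⇨ b) ⇨ (x ⇨ y) ∧
      (((s (b ⇨ b') ⇨ x) ⇨ (s (b' ⇨ b) ⇨ y), b ⇨ b') : A × B)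
        = (s (b' ⇨ b) ⇨ (x ⇨ y), b ⇨ b') := by
  intro b b' x y hpx _ hx hy
  have hvt : s (b' ⇨ b) * (s (b ⇨ b') ⇨ x) = s b' ⇨ (s b * x) := by
    rw [section_himp_eq_himp_section_himp hsm hx]
    exact Hoop.mul_himp_of_himp_eq_one (himp_section_himp_eq_one hpm hpi hps hss hpx b b')
  have main : (s (b ⇨ b') ⇨ x) ⇨ (s (b' ⇨ b) ⇨ y) = s (b' ⇨ b) ⇨ (x ⇨ y) :=
    calc (s (b ⇨ b') ⇨ x) ⇨ (s (b' ⇨ b) ⇨ y)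
        = (s (b' ⇨ b) * (s (b ⇨ b') ⇨ x)) ⇨ y := by rw [mul_comm, Hoop.mul_himp_assoc]
      _ = (s b' * (s (b' ⇨ b) * (s (b ⇨ b') ⇨ x))) ⇨ (s b' * y) := Hoop.himp_eq_mul_himp_mul hy
      _ = (s b' * (s (b' ⇨ b) * x)) ⇨ (s b' * y) := by
        rw [hvt, section_mul_himp_section_mul hpm hsm hsi hps hss hpx]
      _ = (s (b' ⇨ b) * x) ⇨ y := (Hoop.himp_eq_mul_himp_mul hy).symm
      _ = s (b' ⇨ b) ⇨ (x ⇨ y) := Hoop.mul_himp_assoc _ _ _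
  exact ⟨main, by rw [main]⟩

/-- For a split epimorphism of hoops `p : A → B` with strong section `s` and kernel
`X = {a | p a = 1}`, for all `(x,b), (y,b')` in
`Y' = {(x,b) ∈ X × B | s b → (s b · x) = x}` one has
`(s(b → b') → x) → (s(b' → b) → y) = s(b' → b) → (x → y)`; hence Rump's L-algebra
semidirect-product implication coincides on `Y'` with the hoop semidirect-product
implication. -/
theorem stmt18 {A B : Type*} [Hoop A] [Hoop B] (p : A → B) (s : B → A)
    (hp1 : p 1 = 1) (hpm : ∀ a a' : A, p (a * a') = p a * p a')
    (hpi : ∀ a a' : A, p (a ⇨ a') = p a ⇨ p a')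
    (hs1 : s 1 = 1) (hsm : ∀ b b' : B, s (b * b') = s b * s b')
    (hsi : ∀ b b' : B, s (b ⇨ b') = s b ⇨ s b')
    (hps : ∀ b : B, p (s b) = b)
    (hss : ∀ (a : A) (b : B), a ⇨ s b = s (p a) ⇨ s b) :
    ∀ (b b' : B) (x y : A), p x = 1 → p y = 1 →
      s b ⇨ (s b * x) = x → s b' ⇨ (s b' * y) = y →
      (s (b ⇨ b') ⇨ x) ⇨ (s (b' ⇨ b) ⇨ y) = s (b' ⇨ b) ⇨ (x ⇨ y) ∧
      (((s (b ⇨ b') ⇨ x) ⇨ (s (b' ⇨ b) ⇨ y), b ⇨ b') : A × B)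
        = (s (b' ⇨ b) ⇨ (x ⇨ y), b ⇨ b') :=
  stmt18_general p s hpm hpi hsm hsi hps hss
end
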